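/- For all 1 ≤ k ≤ d the bracket ⁅δ, ∂_k⁆ equals k·∂_{k−1}, the bracket ⁅δ, ∂_0⁆ equals 0, and for all 0 ≤ k, k' ≤ d the bracket ⁅∂_k, ∂_{k'}⁆ equals 0. -/
import Mathlib


open MvPolynomial Finset

lemma pderiv_prod_pow_ne {K : Type*} [Field K] {m : ℕ} (i : Fin m) (s : Finset (Fin m))
    (e : Fin m → ℕ) (h : ∀ j ∈ s, j ≠ i) :
    pderiv i (∏ j ∈ s, (X j : MvPolynomial (Fin m) K) ^ e j) = 0 := by
  induction s using Finset.induction with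
  | empty => simp
  | @insert a s' hx ih =>
    rw [Finset.prod_insert hx, pderiv_mul, ih (fun j hj => h j (Finset.mem_insert_of_mem hj)),
      pderiv_pow, pderiv_X_of_ne (h a (Finset.mem_insert_self a s'))]
    ring


/-- The derivation `δ = (∏_{j=3}^m x_j^{α_{j1}}) ∂/∂x_1` of `K[x_1, …, x_m]`
(variables are indexed by `Fin m`, so `x_1` is `X ⟨0,_⟩`, `x_2` is `X ⟨1,_⟩`, and the
indices `3 ≤ j ≤ m` are those `j : Fin m` with `2 ≤ j.val`). -/
noncomputable def deltaD (K : Type*) [Field K] (m : ℕ) (hm : 2 ≤ m) (α1 : Fin m → ℕ) :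
    Derivation K (MvPolynomial (Fin m) K) (MvPolynomial (Fin m) K) :=
  (∏ j ∈ Finset.univ.filter (fun j : Fin m => 2 ≤ j.val),
      (X j : MvPolynomial (Fin m) K) ^ α1 j) • pderiv (⟨0, by omega⟩ : Fin m)

/-- The derivation `∂_k = x_1^k (∏_{j=3}^m x_j^{α_{j2} - k α_{j1}}) ∂/∂x_2`. -/
noncomputable def partialD (K : Type*) [Field K] (m : ℕ) (hm : 2 ≤ m)
    (α1 α2 : Fin m → ℕ) (k : ℕ) :
    Derivation K (MvPolynomial (Fin m) K) (MvPolynomial (Fin m) K) :=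
  ((X (⟨0, by omega⟩ : Fin m) : MvPolynomial (Fin m) K) ^ k *
      ∏ j ∈ Finset.univ.filter (fun j : Fin m => 2 ≤ j.val),
        (X j : MvPolynomial (Fin m) K) ^ (α2 j - k * α1 j)) •
    pderiv (⟨1, by omega⟩ : Fin m)

/-- `⁅δ, ∂_k⁆ = k ∂_{k-1}` for `1 ≤ k ≤ d`, `⁅δ, ∂_0⁆ = 0`, and
`⁅∂_k, ∂_{k'}⁆ = 0` for `0 ≤ k, k' ≤ d`. -/
theorem stmt11 (K : Type*) [Field K] [CharZero K] (m : ℕ) (hm : 2 ≤ m)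
    (α1 α2 : Fin m → ℕ) (d : ℕ) (hd : 1 ≤ d)
    (hα : ∀ j : Fin m, 2 ≤ j.val → d * α1 j ≤ α2 j) :
    (∀ k : ℕ, 1 ≤ k → k ≤ d →
        ⁅deltaD K m hm α1, partialD K m hm α1 α2 k⁆ = k • partialD K m hm α1 α2 (k - 1)) ∧
      ⁅deltaD K m hm α1, partialD K m hm α1 α2 0⁆ = 0 ∧
      ∀ k k' : ℕ, k ≤ d → k' ≤ d →
        ⁅partialD K m hm α1 α2 k, partialD K m hm α1 α2 k'⁆ = 0 := by
  classical
  set i0 : Fin m := ⟨0, by omega⟩ with hi0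
  set i1 : Fin m := ⟨1, by omega⟩ with hi1
  set s : Finset (Fin m) := Finset.univ.filter (fun j : Fin m => 2 ≤ j.val) with hs
  have hmem : ∀ j ∈ s, 2 ≤ j.val := by
    intro j hj; rw [hs, Finset.mem_filter] at hj; exact hj.2
  have hne0 : ∀ j ∈ s, j ≠ i0 := by
    intro j hj h; have := hmem j hj; rw [h, hi0] at this; simp at this
  have hne1 : ∀ j ∈ s, j ≠ i1 := by
    intro j hj h; have := hmem j hj; rw [h, hi1] at this; simp at this
  have h01 : i0 ≠ i1 := by simp [hi0, hi1, Fin.ext_iff]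
  -- value of partialD at X i
  have hpart : ∀ (k : ℕ) (i : Fin m), partialD K m hm α1 α2 k (X i) =
      if i = i1 then ((X i0 : MvPolynomial (Fin m) K) ^ k *
        ∏ j ∈ s, (X j : MvPolynomial (Fin m) K) ^ (α2 j - k * α1 j)) else 0 := by
    intro k i
    rw [partialD]
    by_cases h : i = i1
    · subst h; simp [Derivation.smul_apply, pderiv_X_self, ← hi0, ← hi1, ← hs]
    · simp [Derivation.smul_apply, pderiv_X_of_ne h, ← hi0, ← hi1, ← hs, h]
  have hdelta : ∀ i : Fin m, deltaD K m hm α1 (X i) =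
      if i = i0 then (∏ j ∈ s, (X j : MvPolynomial (Fin m) K) ^ α1 j) else 0 := by
    intro i
    rw [deltaD]
    by_cases h : i = i0
    · subst h; simp [Derivation.smul_apply, pderiv_X_self, ← hi0, ← hs]
    · simp [Derivation.smul_apply, pderiv_X_of_ne h, ← hi0, ← hs, h]
  -- partialD applied to a polynomial with pderiv i1 = 0 is 0
  have hpartzero : ∀ (k : ℕ) (p : MvPolynomial (Fin m) K),
      pderiv i1 p = 0 → partialD K m hm α1 α2 k p = 0 := by
    intro k p hp
    rw [partialD]
    simp [Derivation.smul_apply, ← hi1, hp]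
  refine ⟨?_, ?_, ?_⟩
  · -- ⁅δ, ∂_k⁆ = k • ∂_{k-1}
    intro k hk1 hk2
    apply derivation_ext
    intro i
    rw [Derivation.commutator_apply, Derivation.smul_apply, hdelta i, hpart k i]
    by_cases h1 : i = i1
    · subst h1
      rw [if_pos rfl, if_neg (Ne.symm h01), map_zero, sub_zero, hpart (k - 1) i1, if_pos rfl]
      rw [deltaD, Derivation.smul_apply]
      rw [pderiv_mul, pderiv_pow, pderiv_X_self, pderiv_prod_pow_ne i0 s _ hne0]
      rw [← hs]
      have key : (∏ j ∈ s, (X j : MvPolynomial (Fin m) K) ^ α1 j) *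
          (∏ j ∈ s, (X j : MvPolynomial (Fin m) K) ^ (α2 j - k * α1 j)) =
          ∏ j ∈ s, (X j : MvPolynomial (Fin m) K) ^ (α2 j - (k - 1) * α1 j) := by
        rw [← Finset.prod_mul_distrib]
        apply Finset.prod_congr rfl
        intro j hj
        have h2 : k * α1 j ≤ α2 j :=
          le_trans (Nat.mul_le_mul_right _ hk2) (hα j (hmem j hj))
        have h3 : (k - 1) * α1 j = k * α1 j - α1 j := by rw [Nat.sub_mul, one_mul]
        have h4 : α1 j ≤ k * α1 j := Nat.le_mul_of_pos_left _ hk1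
        rw [← pow_add, h3]
        congr 1
        obtain ⟨c, hc⟩ : ∃ c, k * α1 j = c := ⟨_, rfl⟩
        rw [hc] at h2 h4 ⊢
        omega
      rw [smul_eq_mul, nsmul_eq_mul, ← key]
      ring
    · rw [if_neg h1, map_zero, zero_sub, hpart (k - 1) i, if_neg h1, smul_zero]
      by_cases h0 : i = i0
      · rw [if_pos h0, neg_eq_zero]
        exact hpartzero k _ (pderiv_prod_pow_ne i1 s _ hne1)
      · rw [if_neg h0, map_zero, neg_zero]
  · -- ⁅δ, ∂_0⁆ = 0
    apply derivation_ext
    intro i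
    rw [Derivation.commutator_apply, hdelta i, hpart 0 i, Derivation.zero_apply]
    by_cases h1 : i = i1
    · subst h1
      rw [if_pos rfl, if_neg (Ne.symm h01), map_zero, sub_zero]
      rw [deltaD, Derivation.smul_apply]
      rw [pow_zero, one_mul, pderiv_prod_pow_ne i0 s _ hne0, smul_zero]
    · rw [if_neg h1, map_zero, zero_sub, neg_eq_zero]
      by_cases h0 : i = i0
      · rw [if_pos h0]
        exact hpartzero 0 _ (pderiv_prod_pow_ne i1 s _ hne1)
      · rw [if_neg h0, map_zero]
  · -- ⁅∂_k, ∂_{k'}⁆ = 0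
    intro k k' _ _
    apply derivation_ext
    intro i
    rw [Derivation.commutator_apply, hpart k i, hpart k' i, Derivation.zero_apply]
    by_cases h1 : i = i1
    · rw [if_pos h1, if_pos h1]
      rw [hpartzero k _ ?_, hpartzero k' _ ?_, sub_zero]
      · rw [pderiv_mul, pderiv_pow, pderiv_X_of_ne h01,
          pderiv_prod_pow_ne i1 s _ hne1]; ring
      · rw [pderiv_mul, pderiv_pow, pderiv_X_of_ne h01,
          pderiv_prod_pow_ne i1 s _ hne1]; ring
    · rw [if_neg h1, if_neg h1, map_zero, map_zero, sub_zero]
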